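/- arXiv:1506.01735 — 5 statements merged into one kernel-verified Lean document; each statement's English description precedes it below -/
import Mathlib

section
/- Let f : ℝ^n → ℝ be a nonzero linear form and v a nonzero vector in ℝ^n. Then the projective distance from [v] to the projective hyperplane [ker f] satisfies d([v], [ker f]) = |f(v)| / (‖f‖·‖v‖), where d([v],[w]) = ‖v ∧ w‖/(‖v‖‖w‖) and the distance to the hyperplane is the infimum of d([v],[w]) over nonzero w ∈ ker f. -/
/-!
Let `a` be the vector dual to `f`. The Lagrange identity `‖v ∧ w‖² = ‖v‖²‖w‖² - ⟪v, w⟫²`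
gives `d([v], [w])² = 1 - cos²(v, w)`. For `w ⊥ a`, Bessel's inequality for the orthogonal pair
`a, w` gives `cos²(v, a) + cos²(v, w) ≤ 1`, i.e. `d([v], [w]) ≥ |cos(v, a)| = |f v| / (‖f‖‖v‖)`.
Equality holds when `w` is the component of `v` orthogonal to `a`, or, if that component
vanishes, for any nonzero `w ⊥ a`, which exists because `n ≥ 2`.
-/

open scoped BigOperators

noncomputable def nrm {n : ℕ} (v : Fin n → ℝ) : ℝ := Real.sqrt (∑ i, v i ^ 2)

noncomputable def wedgeSq {n : ℕ} (v w : Fin n → ℝ) : ℝ :=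
  ∑ i, ∑ j, if i < j then (v i * w j - v j * w i) ^ 2 else 0

/-- Projective distance between the lines spanned by `v` and `w`. -/
noncomputable def pd {n : ℕ} (v w : Fin n → ℝ) : ℝ :=
  Real.sqrt (wedgeSq v w) / (nrm v * nrm w)

open Module RealInnerProductSpace

lemma sum_sum_eq_two_mul_sum_sum_ite_lt {ι R : Type*} [Fintype ι] [LinearOrder ι] [Semiring R]
    (g : ι → ι → R) (hsymm : ∀ i j, g i j = g j i) (hdiag : ∀ i, g i i = 0) :
    ∑ i, ∑ j, g i j = 2 * ∑ i, ∑ j, if i < j then g i j else 0 := by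
  have hsplit : ∀ i j, g i j = (if i < j then g i j else 0) + if j < i then g i j else 0 := by
    intro i j
    rcases lt_trichotomy i j with h | rfl | h
    · simp [h, h.not_gt]
    · simp [hdiag]
    · simp [h, h.not_gt]
  simp_rw [Finset.sum_congr rfl fun i _ => Finset.sum_congr rfl fun j _ => hsplit i j,
    Finset.sum_add_distrib, two_mul]
  rw [Finset.sum_comm (f := fun i j => if j < i then g i j else 0)]
  simp_rw [hsymm]

lemma sum_sum_mul_sub_mul_sq {ι R : Type*} [Fintype ι] [CommRing R] (v w : ι → R) :
    ∑ i, ∑ j, (v i * w j - v j * w i) ^ 2 =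
      2 * ((∑ i, v i ^ 2) * (∑ i, w i ^ 2) - (∑ i, v i * w i) ^ 2) := by
  calc ∑ i, ∑ j, (v i * w j - v j * w i) ^ 2
      = ∑ i, ∑ j, (v i ^ 2 * w j ^ 2 + v j ^ 2 * w i ^ 2 - 2 * ((v i * w i) * (v j * w j))) :=
        Finset.sum_congr rfl fun i _ => Finset.sum_congr rfl fun j _ => by ring
    _ = 2 * ((∑ i, v i ^ 2) * (∑ i, w i ^ 2) - (∑ i, v i * w i) ^ 2) := by
        simp only [Finset.sum_add_distrib, Finset.sum_sub_distrib, ← Finset.mul_sum,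
          ← Finset.sum_mul]
        ring

section InnerProductSpace

variable {E : Type*} [NormedAddCommGroup E] [InnerProductSpace ℝ E]

noncomputable def projDist (v w : E) : ℝ :=
  √(‖v‖ ^ 2 * ‖w‖ ^ 2 - ⟪v, w⟫ ^ 2) / (‖v‖ * ‖w‖)

/-- `‖a‖²` times the component of `v` orthogonal to `a`; the scaling avoids dividing by `‖a‖²`. -/
noncomputable def orthComponent (a v : E) : E := ‖a‖ ^ 2 • v - ⟪a, v⟫ • a

lemma inner_sq_le_norm_sq_mul_norm_sq (v w : E) : ⟪v, w⟫ ^ 2 ≤ ‖v‖ ^ 2 * ‖w‖ ^ 2 := by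
  rw [← mul_pow, ← sq_abs]
  exact pow_le_pow_left₀ (abs_nonneg _) (abs_real_inner_le_norm v w) 2

lemma projDist_nonneg (v w : E) : 0 ≤ projDist v w := by
  unfold projDist; positivity

lemma projDist_sq {v w : E} (hv : v ≠ 0) (hw : w ≠ 0) :
    projDist v w ^ 2 = 1 - ⟪v, w⟫ ^ 2 / (‖v‖ ^ 2 * ‖w‖ ^ 2) := by
  have hvw : 0 < ‖v‖ ^ 2 * ‖w‖ ^ 2 := by positivity
  rw [projDist, div_pow, Real.sq_sqrt (sub_nonneg.2 (inner_sq_le_norm_sq_mul_norm_sq v w)),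
    mul_pow]
  field_simp

section orthComponent

variable (a v : E)

lemma inner_orthComponent_left : ⟪a, orthComponent a v⟫ = 0 := by
  rw [orthComponent, inner_sub_right, real_inner_smul_right, real_inner_smul_right,
    real_inner_self_eq_norm_sq]
  ring

lemma inner_orthComponent_right :
    ⟪v, orthComponent a v⟫ = ‖a‖ ^ 2 * ‖v‖ ^ 2 - ⟪a, v⟫ ^ 2 := by
  rw [orthComponent, inner_sub_right, real_inner_smul_right, real_inner_smul_right,
    real_inner_self_eq_norm_sq, real_inner_comm]
  ring

lemma norm_orthComponent_sq :
    ‖orthComponent a v‖ ^ 2 = ‖a‖ ^ 2 * (‖a‖ ^ 2 * ‖v‖ ^ 2 - ⟪a, v⟫ ^ 2) := by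
  rw [← real_inner_self_eq_norm_sq]
  nth_rw 1 [orthComponent]
  rw [inner_sub_left, real_inner_smul_left, real_inner_smul_left, inner_orthComponent_right,
    inner_orthComponent_left]
  ring

lemma inner_orthComponent_of_inner_eq_zero {w : E} (haw : ⟪a, w⟫ = 0) :
    ⟪orthComponent a v, w⟫ = ‖a‖ ^ 2 * ⟪v, w⟫ := by
  rw [orthComponent, inner_sub_left, real_inner_smul_left, real_inner_smul_left, haw, mul_zero,
    sub_zero]

end orthComponent

variable {a v : E}

lemma inner_sq_mul_add_inner_sq_mul_le {w : E} (haw : ⟪a, w⟫ = 0) :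
    ⟪a, v⟫ ^ 2 * ‖w‖ ^ 2 + ⟪v, w⟫ ^ 2 * ‖a‖ ^ 2 ≤ ‖a‖ ^ 2 * ‖v‖ ^ 2 * ‖w‖ ^ 2 := by
  rcases eq_or_ne a 0 with rfl | ha
  · simp
  have hCS := inner_sq_le_norm_sq_mul_norm_sq (orthComponent a v) w
  rw [inner_orthComponent_of_inner_eq_zero a v haw, norm_orthComponent_sq] at hCS
  refine le_of_mul_le_mul_left ?_ (by positivity : 0 < ‖a‖ ^ 2)
  linear_combination hCS

lemma abs_inner_div_le_projDist {w : E} (hv : v ≠ 0) (hw : w ≠ 0) (haw : ⟪a, w⟫ = 0) :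
    |⟪a, v⟫| / (‖a‖ * ‖v‖) ≤ projDist v w := by
  rcases eq_or_ne a 0 with rfl | ha
  · simpa using projDist_nonneg v w
  rw [← pow_le_pow_iff_left₀ (by positivity) (projDist_nonneg v w) two_ne_zero,
    projDist_sq hv hw, div_pow, mul_pow, sq_abs, le_sub_iff_add_le,
    div_add_div _ _ (by positivity) (by positivity), div_le_one (by positivity)]
  linear_combination ‖v‖ ^ 2 * inner_sq_mul_add_inner_sq_mul_le (v := v) haw

lemma exists_ne_zero_inner_eq_zero [FiniteDimensional ℝ E] (hE : 2 ≤ finrank ℝ E) (ha : a ≠ 0) :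
    ∃ w ≠ 0, ⟪a, w⟫ = 0 := by
  have hrank := Submodule.finrank_add_finrank_orthogonal (ℝ ∙ a)
  rw [finrank_span_singleton ha] at hrank
  obtain ⟨w, hw, hw0⟩ := Submodule.exists_mem_ne_zero_of_ne_bot (p := (ℝ ∙ a)ᗮ) <| by
    rw [ne_eq, ← Submodule.finrank_eq_zero]
    omega
  exact ⟨w, hw0, Submodule.mem_orthogonal_singleton_iff_inner_right.1 hw⟩

lemma exists_projDist_eq [FiniteDimensional ℝ E] (hE : 2 ≤ finrank ℝ E) (ha : a ≠ 0)
    (hv : v ≠ 0) : ∃ w ≠ 0, ⟪a, w⟫ = 0 ∧ projDist v w = |⟪a, v⟫| / (‖a‖ * ‖v‖) := by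
  have hu := norm_orthComponent_sq a v
  have hA : 0 < ‖a‖ ^ 2 := by positivity
  have hV : 0 < ‖v‖ ^ 2 := by positivity
  by_cases hu0 : orthComponent a v = 0
  · obtain ⟨w, hw, haw⟩ := exists_ne_zero_inner_eq_zero hE ha
    have hvw : ⟪v, w⟫ = 0 := by
      have := inner_orthComponent_of_inner_eq_zero a v haw
      rw [hu0, inner_zero_left, zero_eq_mul] at this
      exact this.resolve_left hA.ne'
    refine ⟨w, hw, haw, ?_⟩
    rw [← sq_eq_sq₀ (projDist_nonneg v w) (by positivity), projDist_sq hv hw, div_pow, mul_pow,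
      sq_abs, hvw]
    rw [hu0, norm_zero] at hu
    field_simp
    nlinarith
  · refine ⟨_, hu0, inner_orthComponent_left a v, ?_⟩
    have hK : 0 < ‖a‖ ^ 2 * ‖v‖ ^ 2 - ⟪a, v⟫ ^ 2 := by
      have := norm_pos_iff.2 hu0
      nlinarith
    rw [← sq_eq_sq₀ (projDist_nonneg v _) (by positivity), projDist_sq hv hu0, div_pow, mul_pow,
      sq_abs, inner_orthComponent_right, hu]
    field_simp
    ring

theorem sInf_projDist_of_inner_eq_zero [FiniteDimensional ℝ E] (hE : 2 ≤ finrank ℝ E)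
    (ha : a ≠ 0) (hv : v ≠ 0) :
    sInf {t | ∃ w, w ≠ 0 ∧ ⟪a, w⟫ = 0 ∧ t = projDist v w} = |⟪a, v⟫| / (‖a‖ * ‖v‖) := by
  refine IsLeast.csInf_eq ⟨?_, ?_⟩
  · obtain ⟨w, hw, haw, h⟩ := exists_projDist_eq hE ha hv
    exact ⟨w, hw, haw, h.symm⟩
  · rintro t ⟨w, hw, haw, rfl⟩
    exact abs_inner_div_le_projDist hv hw haw

end InnerProductSpace

section Coordinates

variable {n : ℕ}

lemma nrm_eq_norm (v : Fin n → ℝ) : nrm v = ‖WithLp.toLp 2 v‖ := by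
  simp [nrm, EuclideanSpace.norm_eq]

lemma sum_sq_eq_norm_sq (v : Fin n → ℝ) : ∑ i, v i ^ 2 = ‖WithLp.toLp 2 v‖ ^ 2 := by
  simp [EuclideanSpace.norm_sq_eq]

lemma sum_mul_eq_inner (v w : Fin n → ℝ) :
    ∑ i, v i * w i = ⟪WithLp.toLp 2 v, WithLp.toLp 2 w⟫ := by
  simp [PiLp.inner_apply, mul_comm]

lemma wedgeSq_eq (v w : Fin n → ℝ) :
    wedgeSq v w = (∑ i, v i ^ 2) * (∑ i, w i ^ 2) - (∑ i, v i * w i) ^ 2 := by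
  have h := sum_sum_eq_two_mul_sum_sum_ite_lt (fun i j => (v i * w j - v j * w i) ^ 2)
    (fun i j => by ring) (fun i => by ring)
  rw [sum_sum_mul_sub_mul_sq] at h
  unfold wedgeSq
  linarith

lemma pd_eq_projDist (v w : Fin n → ℝ) :
    pd v w = projDist (WithLp.toLp 2 v) (WithLp.toLp 2 w) := by
  rw [pd, projDist, wedgeSq_eq, sum_sq_eq_norm_sq, sum_sq_eq_norm_sq, sum_mul_eq_inner,
    nrm_eq_norm, nrm_eq_norm]

end Coordinates

/-- For a nonzero linear form `f` on `ℝ^n` (`n ≥ 2`) and a nonzero vector `v`, the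
projective distance from `[v]` to the projective hyperplane `[ker f]`, i.e. the
infimum of `d([v],[w])` over nonzero `w ∈ ker f`, equals `|f(v)|/(‖f‖‖v‖)`. -/
theorem dist_to_kernel_hyperplane {n : ℕ} (hn : 2 ≤ n)
    (f : (Fin n → ℝ) →ₗ[ℝ] ℝ) (hf : f ≠ 0) (v : Fin n → ℝ) (hv : v ≠ 0)
    (fdual : Fin n → ℝ) (hfdual : ∀ x, f x = ∑ i, fdual i * x i) :
    sInf {t : ℝ | ∃ w : Fin n → ℝ, w ≠ 0 ∧ f w = 0 ∧ t = pd v w} =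
      |f v| / (nrm fdual * nrm v) := by
  have hfdual0 : fdual ≠ 0 := by
    rintro rfl
    exact hf (LinearMap.ext fun x => by simp [hfdual])
  have hset : {t : ℝ | ∃ w : Fin n → ℝ, w ≠ 0 ∧ f w = 0 ∧ t = pd v w} =
      {t | ∃ w, w ≠ 0 ∧ ⟪WithLp.toLp 2 fdual, w⟫ = 0 ∧ t = projDist (WithLp.toLp 2 v) w} := by
    ext t
    simp only [Set.mem_ofPred_eq, hfdual, sum_mul_eq_inner, pd_eq_projDist]
    exact (WithLp.equiv 2 (Fin n → ℝ)).symm.exists_congr_left.trans (by simp)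
  rw [hset, sInf_projDist_of_inner_eq_zero (by simpa) (by simpa) (by simpa), hfdual,
    sum_mul_eq_inner, nrm_eq_norm, nrm_eq_norm]
end

section
/- Let γ = diag(a₁,…,a_n) ∈ SL_n(ℝ) with a₁ ≥ ⋯ ≥ a_n > 0, let 1 ≤ k < n, let ε > 0, and suppose a_{k+1}/a_k ≤ ε². Let H be the projective hyperplane in P(Λ^k ℝ^n) spanned by the basis wedges e_{i₁}∧⋯∧e_{i_k} other than e₁∧⋯∧e_k, and let v₀ = [e₁∧⋯∧e_k]. Then for any nonzero v ∈ Λ^k ℝ^n with d([v], H) ≥ ε (equivalently |v_{1,2,…,k}|/‖v‖ ≥ ε), one has d([Λ^k(γ) v], v₀) ≤ ε. -/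
open scoped BigOperators

/-- Euclidean norm with respect to an orthonormal basis indexed by `ι`. -/
noncomputable def nrmG {ι : Type*} [Fintype ι] (v : ι → ℝ) : ℝ := Real.sqrt (∑ i, v i ^ 2)

noncomputable def innerpG {ι : Type*} [Fintype ι] (v w : ι → ℝ) : ℝ := ∑ i, v i * w i

/-- Projective distance `‖v∧w‖/(‖v‖‖w‖)`, using `‖v∧w‖² = ‖v‖²‖w‖² − ⟨v,w⟩²`. -/
noncomputable def pdG {ι : Type*} [Fintype ι] (v w : ι → ℝ) : ℝ :=
  Real.sqrt (nrmG v ^ 2 * nrmG w ^ 2 - innerpG v w ^ 2) / (nrmG v * nrmG w)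

/-!
The coordinate of `Λ^k(γ) v` along the wedge `e_s` is `v_s ∏_{i ∈ s} a_i`. Among `k`-subsets
`s`, the product `∏_{i ∈ s} a_i` is largest for `s₀ = {1,…,k}`, and for `s ≠ s₀` trading an
index outside `s₀` against one inside it costs at least the factor `a_{k+1}/a_k ≤ ε²`. So every
coordinate other than the `s₀`-one is damped by `ε²` relative to it, while `|v_{s₀}| ≥ ε‖v‖`;
writing `P = ∏_{i ∈ s₀} a_i`, the squared mass of `Λ^k(γ) v` off `e₁∧⋯∧e_k` is at most
`ε⁴ P² ‖v‖² ≤ ε² P² |v_{s₀}|² ≤ ε² ‖Λ^k(γ) v‖²`.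
-/

open Finset

section Exchange

variable {ι R : Type*} [DecidableEq ι] [CommSemiring R] [PartialOrder R] [IsOrderedRing R]

theorem prod_le_mul_prod_of_exchange {s t : Finset ι} {f : ι → R} {b c r : R}
    (hst : s ≠ t) (hcard : s.card = t.card) (hf : ∀ i ∈ s, 0 ≤ f i)
    (hb : 0 ≤ b) (hbc : b ≤ c) (hr : 0 ≤ r) (hbr : b ≤ r * c)
    (hs : ∀ i ∈ s \ t, f i ≤ b) (ht : ∀ i ∈ t \ s, c ≤ f i) :
    ∏ i ∈ s, f i ≤ r * ∏ i ∈ t, f i := by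
  set m := (s \ t).card
  have hm : 0 < m :=
    card_pos.2 (sdiff_nonempty.2 fun h => hst (eq_of_subset_of_card_le h hcard.ge))
  have hout : ∏ i ∈ s \ t, f i ≤ b ^ m := by
    simpa using prod_le_prod (fun i hi => hf i (sdiff_subset hi)) hs
  have hin : c ^ m ≤ ∏ i ∈ t \ s, f i := by
    have htm : (t \ s).card = m := (card_sdiff_comm hcard).symm
    simpa [htm] using prod_le_prod (fun _ _ => hb.trans hbc) ht
  have hpow : b ^ m ≤ r * c ^ m := by
    rw [← Nat.succ_pred_eq_of_pos hm, pow_succ', pow_succ', ← mul_assoc]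
    exact mul_le_mul hbr (pow_le_pow_left₀ hb hbc _) (pow_nonneg hb _)
      (mul_nonneg hr (hb.trans hbc))
  calc ∏ i ∈ s, f i = (∏ i ∈ s ∩ t, f i) * ∏ i ∈ s \ t, f i :=
        (prod_inter_mul_prod_sdiff s t f).symm
    _ ≤ (∏ i ∈ s ∩ t, f i) * (r * ∏ i ∈ t \ s, f i) :=
        mul_le_mul_of_nonneg_left (hout.trans (hpow.trans (mul_le_mul_of_nonneg_left hin hr)))
          (prod_nonneg fun i hi => hf i (inter_subset_left hi))
    _ = r * ∏ i ∈ t, f i := by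
        rw [← prod_inter_mul_prod_sdiff t s f, inter_comm]
        ring

end Exchange

theorem Antitone.prod_le_mul_prod_initial {R : Type*} [CommSemiring R] [PartialOrder R]
    [IsOrderedRing R] {n k : ℕ} (hkn : k < n) {a : Fin n → R} (ha : Antitone a)
    (ha0 : ∀ i, 0 ≤ a i) {r : R} (hr : 0 ≤ r)
    (hgap : a ⟨k, hkn⟩ ≤ r * a ⟨k - 1, (Nat.sub_le k 1).trans_lt hkn⟩)
    {s t : Finset (Fin n)} (ht : ∀ i, i ∈ t ↔ (i : ℕ) < k) (hcard : s.card = t.card)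
    (hst : s ≠ t) : ∏ i ∈ s, a i ≤ r * ∏ i ∈ t, a i := by
  refine prod_le_mul_prod_of_exchange hst hcard (fun i _ => ha0 i) (ha0 _)
    (ha (Fin.le_def.2 (by simp only; omega))) hr hgap (fun i hi => ha ?_) (fun i hi => ha ?_)
  · have := (ht i).not.1 (mem_sdiff.1 hi).2
    exact Fin.le_def.2 (by simp only; omega)
  · have := (ht i).1 (mem_sdiff.1 hi).1
    exact Fin.le_def.2 (by simp only; omega)

section ProjectiveDistance

variable {ι : Type*} [Fintype ι]

theorem nrmG_sq (v : ι → ℝ) : nrmG v ^ 2 = ∑ i, v i ^ 2 :=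
  Real.sq_sqrt (sum_nonneg fun _ _ => sq_nonneg _)

theorem sq_mul_sq_le_sq_of_le_abs_div {ε x N : ℝ} (hε : 0 ≤ ε) (hN : 0 ≤ N)
    (h : ε ≤ |x| / N) : ε ^ 2 * N ^ 2 ≤ x ^ 2 := by
  rcases hN.eq_or_lt with rfl | hN
  · simpa using sq_nonneg x
  rw [← mul_pow, ← sq_abs x]
  exact pow_le_pow_left₀ (by positivity) ((le_div_iff₀ hN).1 h) 2

variable [DecidableEq ι]

theorem pdG_indicator_le {w : ι → ℝ} {i₀ : ι} {ε : ℝ} (hε : 0 ≤ ε)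
    (h : nrmG w ^ 2 - w i₀ ^ 2 ≤ ε ^ 2 * nrmG w ^ 2) :
    pdG w (fun i => if i = i₀ then 1 else 0) ≤ ε := by
  have hnorm : nrmG (fun i : ι => if i = i₀ then (1 : ℝ) else 0) = 1 := by
    simp [nrmG, apply_ite (· ^ 2)]
  have hinner : innerpG w (fun i => if i = i₀ then 1 else 0) = w i₀ := by
    simp [innerpG]
  rw [pdG, hnorm, hinner, one_pow, mul_one, mul_one]
  refine div_le_of_le_mul₀ (Real.sqrt_nonneg _) hε ?_
  calc Real.sqrt (nrmG w ^ 2 - w i₀ ^ 2) ≤ Real.sqrt ((ε * nrmG w) ^ 2) := by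
        rw [mul_pow]
        exact Real.sqrt_le_sqrt h
    _ = ε * nrmG w := Real.sqrt_sq (mul_nonneg hε (Real.sqrt_nonneg _))

theorem sum_sq_mul_sub_le {p v : ι → ℝ} {i₀ : ι} {ε : ℝ} (hp0 : ∀ i, 0 ≤ p i)
    (hp : ∀ i ≠ i₀, p i ≤ ε ^ 2 * p i₀) (hv : ε ^ 2 * ∑ i, v i ^ 2 ≤ v i₀ ^ 2) :
    ∑ i, (p i * v i) ^ 2 - (p i₀ * v i₀) ^ 2 ≤ ε ^ 2 * ∑ i, (p i * v i) ^ 2 := by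
  calc ∑ i, (p i * v i) ^ 2 - (p i₀ * v i₀) ^ 2
        = ∑ i ∈ univ.erase i₀, (p i * v i) ^ 2 := (sum_erase_eq_sub (mem_univ _)).symm
    _ ≤ ∑ i ∈ univ.erase i₀, (ε ^ 2 * p i₀) ^ 2 * v i ^ 2 := by
        refine sum_le_sum fun i hi => ?_
        rw [mul_pow]
        gcongr
        exacts [hp0 i, hp i (ne_of_mem_erase hi)]
    _ ≤ ∑ i, (ε ^ 2 * p i₀) ^ 2 * v i ^ 2 :=
        sum_le_sum_of_subset_of_nonneg (erase_subset _ _) fun _ _ _ => by positivity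
    _ = ε ^ 2 * p i₀ ^ 2 * (ε ^ 2 * ∑ i, v i ^ 2) := by
        rw [← mul_sum]
        ring
    _ ≤ ε ^ 2 * p i₀ ^ 2 * v i₀ ^ 2 := by gcongr
    _ = ε ^ 2 * (p i₀ * v i₀) ^ 2 := by ring
    _ ≤ ε ^ 2 * ∑ i, (p i * v i) ^ 2 := by
        gcongr
        exact single_le_sum (fun i _ => sq_nonneg (p i * v i)) (mem_univ i₀)

end ProjectiveDistance

/-- ε-contraction on the exterior power `P(Λ^k ℝ^n)` for a diagonal matrix
`γ = diag(a₁ ≥ ⋯ ≥ a_n > 0)` with `a_{k+1}/a_k ≤ ε²`: any `[v]` at distance at least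
`ε` from the hyperplane `H` (equivalently `|v_{1,…,k}|/‖v‖ ≥ ε`) is sent by `Λ^k(γ)`
into the `ε`-ball around `v₀ = [e₁∧⋯∧e_k]`.  Here `Λ^k ℝ^n` has orthonormal basis
indexed by `k`-element subsets of `Fin n`, and `Λ^k(γ)` multiplies the coordinate at
`s` by `∏_{i∈s} a_i`; `s₀ = {1,…,k}` indexes the top wedge `e₁∧⋯∧e_k`. -/
theorem eps_contracting_exterior_power {n k : ℕ} (hkn : k < n)
    (a : Fin n → ℝ) (ha_pos : ∀ i, 0 < a i) (ha_mono : ∀ i j : Fin n, i ≤ j → a j ≤ a i)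
    (ε : ℝ) (hε0 : 0 < ε)
    (hgap : a ⟨k, hkn⟩ / a ⟨k - 1, by omega⟩ ≤ ε ^ 2)
    (s₀ : {s : Finset (Fin n) // s.card = k})
    (hs₀ : ∀ i : Fin n, i ∈ s₀.1 ↔ (i : ℕ) < k)
    (v : {s : Finset (Fin n) // s.card = k} → ℝ)
    (hfar : ε ≤ |v s₀| / nrmG v) :
    pdG (fun s => (∏ i ∈ s.1, a i) * v s)
        (fun s => if s = s₀ then (1 : ℝ) else 0) ≤ ε := by
  have hdom : ∀ s ≠ s₀, ∏ i ∈ s.1, a i ≤ ε ^ 2 * ∏ i ∈ s₀.1, a i := fun s hs =>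
    Antitone.prod_le_mul_prod_initial hkn ha_mono (fun i => (ha_pos i).le) (sq_nonneg ε)
      ((div_le_iff₀ (ha_pos _)).1 hgap) hs₀ (s.2.trans s₀.2.symm) (fun h => hs (Subtype.ext h))
  have hv₀ : ε ^ 2 * ∑ s, v s ^ 2 ≤ v s₀ ^ 2 := by
    rw [← nrmG_sq]
    exact sq_mul_sq_le_sq_of_le_abs_div hε0.le (Real.sqrt_nonneg _) hfar
  refine pdG_indicator_le hε0.le ?_
  rw [nrmG_sq]
  exact sum_sq_mul_sub_le (fun s => prod_nonneg fun i _ => (ha_pos i).le) hdom hv₀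
end

section
/- Fix a real number T > 0. The number of matrices γ ∈ SL_2(ℤ) with ‖γ‖ ≤ X and |tr(γ)| < T is O_ε(T · X^{1+ε}) for every ε > 0; consequently, since |{γ ∈ SL_2(ℤ) : ‖γ‖ ≤ X}| ≫ X², the proportion of elements of norm at most X with |trace| ≤ T tends to 0 as X → ∞. -/
open Filter

/-- Spectral norm `‖γ‖ = √λ_max(γᵗγ)` of an integral matrix, via the operator norm
of its action on Euclidean space. -/
noncomputable def snorm (γ : Matrix.SpecialLinearGroup (Fin 2) ℤ) : ℝ :=
  ‖Matrix.toEuclideanCLM (𝕜 := ℝ) ((γ : Matrix (Fin 2) (Fin 2) ℤ).map (Int.cast : ℤ → ℝ))‖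

/-!
Write `γ = !![a, b; c, d]`. If `‖γ‖ ≤ X` then all entries are at most `X` in absolute value, and
`γ` is determined by `t = tr γ`, `a`, `b`, `c`, subject to `b c = a (t - a) - 1`. For each of the
`O(T X)` choices of `(t, a)` the right-hand side is an integer of size `O(T X²)`; it vanishes for
at most two choices, and otherwise the divisor bound `d(n) ≪ n ^ (ε / 2)` leaves `O(X ^ ε)` choices
of `(b, c)`.

Conversely, every coprime pair `(a, c) ∈ [1, N]²` is the first column of some `γ ∈ SL(2, ℤ)` whose
entries are all at most `N`, so that `‖γ‖ ≤ 2 N`; and at least `N² / 12` of these pairs are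
coprime, because `∑_{g ≥ 2} g⁻² < 11 / 12`.
-/

open Finset
open scoped MatrixGroups

namespace Matrix

variable {n : Type*} [Fintype n] [DecidableEq n]

theorem abs_apply_le_norm_toEuclideanCLM (A : Matrix n n ℝ) (i j : n) :
    |A i j| ≤ ‖toEuclideanCLM (𝕜 := ℝ) A‖ := by
  have h := (toEuclideanCLM (𝕜 := ℝ) A).le_opNorm (EuclideanSpace.single j 1)
  rw [PiLp.norm_single, norm_one, mul_one] at h
  refine le_trans (le_of_eq ?_) ((PiLp.norm_apply_le _ i).trans h)
  simp [ofLp_toEuclideanCLM, PiLp.ofLp_single]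

theorem norm_toEuclideanCLM_le_sqrt_sum_sq (A : Matrix n n ℝ) :
    ‖toEuclideanCLM (𝕜 := ℝ) A‖ ≤ √(∑ i, ∑ j, A i j ^ 2) := by
  refine ContinuousLinearMap.opNorm_le_bound _ (Real.sqrt_nonneg _) fun x => ?_
  simp only [EuclideanSpace.norm_eq, Real.norm_eq_abs, sq_abs]
  rw [← Real.sqrt_mul' _ (sum_nonneg fun _ _ => sq_nonneg _), sum_mul]
  refine Real.sqrt_le_sqrt (sum_le_sum fun i _ => ?_)
  simpa [ofLp_toEuclideanCLM, mulVec, dotProduct] using sum_mul_sq_le_sq_mul_sq univ (A i) x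

end Matrix

theorem exists_add_one_le_mul_pow {r : ℝ} (hr : 1 < r) :
    ∃ A, 1 ≤ A ∧ ∀ k : ℕ, (k + 1 : ℝ) ≤ A * r ^ k := by
  refine ⟨r / (r - 1), by rw [le_div_iff₀ (by linarith)]; linarith, fun k => ?_⟩
  have hbernoulli := one_add_mul_sub_le_pow (by linarith : -1 ≤ r) k
  have hpow := one_le_pow₀ (n := k) hr.le
  rw [div_mul_eq_mul_div, le_div_iff₀ (by linarith)]
  nlinarith [mul_nonneg (sub_nonneg.mpr hpow) (sub_nonneg.mpr hr.le)]

theorem Nat.exists_card_divisors_le_mul_rpow {ε : ℝ} (hε : 0 < ε) :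
    ∃ C, 0 < C ∧ ∀ n : ℕ, n ≠ 0 → (#n.divisors : ℝ) ≤ C * (n : ℝ) ^ ε := by
  obtain ⟨A, hA, hAk⟩ :=
    exists_add_one_le_mul_pow (Real.one_lt_rpow (by norm_num : (1 : ℝ) < 2) hε)
  set B := ⌈(2 : ℝ) ^ ε⁻¹⌉₊
  refine ⟨A ^ B, by positivity, fun n hn => ?_⟩
  let IsSmall : ℕ → Prop := fun p => (p : ℝ) ^ ε < 2
  -- `(k + 1) / (p ^ ε) ^ k` is at most `1` when `p ^ ε ≥ 2`, and at most `A` for the fewer than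
  -- `B` other primes
  have hfactor : ∀ p : ℕ, 2 ≤ p → ∀ k : ℕ,
      ((k + 1 : ℕ) : ℝ) ≤ (if IsSmall p then A else 1) * ((p : ℝ) ^ ε) ^ k := by
    intro p hp k
    have h2p : (2 : ℝ) ^ ε ≤ (p : ℝ) ^ ε :=
      Real.rpow_le_rpow (by norm_num) (by exact_mod_cast hp) hε.le
    push_cast
    split_ifs with hsmall
    · exact (hAk k).trans (by gcongr)
    · rw [one_mul]
      calc (k + 1 : ℝ) ≤ 2 ^ k := by exact_mod_cast Nat.lt_two_pow_self
        _ ≤ ((p : ℝ) ^ ε) ^ k := by gcongr; exact not_lt.mp hsmall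
  have hsmall : #{p ∈ n.primeFactors | IsSmall p} ≤ B := by
    refine (card_le_card fun p hp => ?_).trans (card_range B).le
    have hp : (p : ℝ) ^ ε < 2 := (mem_filter.mp hp).2
    rw [mem_range, ← Nat.cast_lt (α := ℝ)]
    refine lt_of_lt_of_le ?_ (Nat.le_ceil _)
    rw [← Real.rpow_rpow_inv p.cast_nonneg hε.ne']
    exact Real.rpow_lt_rpow (by positivity) hp (inv_pos.mpr hε)
  have hn_rpow : (n : ℝ) ^ ε = ∏ p ∈ n.primeFactors, ((p : ℝ) ^ ε) ^ n.factorization p := by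
    conv_lhs => rw [← Nat.prod_factorization_pow_eq_self hn]
    rw [Finsupp.prod, Nat.support_factorization, Nat.cast_prod,
      ← Real.finsetProd_rpow _ _ fun p _ => by positivity]
    refine prod_congr rfl fun p _ => ?_
    rw [Nat.cast_pow, Real.rpow_pow_comm p.cast_nonneg]
  calc (#n.divisors : ℝ) = ∏ p ∈ n.primeFactors, ((n.factorization p + 1 : ℕ) : ℝ) := by
        rw [Nat.card_divisors hn, Nat.cast_prod]
    _ ≤ ∏ p ∈ n.primeFactors, (if IsSmall p then A else 1) * ((p : ℝ) ^ ε) ^ n.factorization p :=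
        prod_le_prod (fun _ _ => by positivity)
          fun p hp => hfactor p (Nat.prime_of_mem_primeFactors hp).two_le _
    _ = A ^ #{p ∈ n.primeFactors | IsSmall p} * (n : ℝ) ^ ε := by
        rw [prod_mul_distrib, prod_ite, prod_const, prod_const_one, mul_one, hn_rpow]
    _ ≤ A ^ B * (n : ℝ) ^ ε := by gcongr

theorem Int.card_Icc_neg_natCast (M : ℕ) : #(Icc (-M : ℤ) M) = 2 * M + 1 := by
  rw [Int.card_Icc]
  omega

theorem Int.mem_Icc_floor_of_abs_le {x : ℤ} {r : ℝ} (h : |(x : ℝ)| ≤ r) :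
    x ∈ Icc (-(⌊r⌋₊ : ℤ)) ⌊r⌋₊ := by
  have : x.natAbs ≤ ⌊r⌋₊ := Nat.le_floor (by rwa [Nat.cast_natAbs, Int.cast_abs])
  rw [mem_Icc]
  omega

theorem Int.natAbs_mul_sub_sub_one_le {K M : ℕ} {t a : ℤ} (ht : t ∈ Icc (-K : ℤ) K)
    (ha : a ∈ Icc (-M : ℤ) M) : (a * (t - a) - 1).natAbs ≤ (K + M + 1) ^ 2 := by
  obtain ⟨ht₁, ht₂⟩ := mem_Icc.mp ht
  obtain ⟨ha₁, ha₂⟩ := mem_Icc.mp ha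
  rw [← Int.ofNat_le, Int.natCast_natAbs, abs_le]
  push_cast
  constructor <;> nlinarith [mul_nonneg (sub_nonneg.mpr ha₂) (sub_nonneg.mpr ht₂),
    mul_nonneg (neg_le_iff_add_nonneg.mp ha₁) (neg_le_iff_add_nonneg.mp ht₁),
    mul_nonneg (sub_nonneg.mpr ha₂) (neg_le_iff_add_nonneg.mp ht₁),
    mul_nonneg (neg_le_iff_add_nonneg.mp ha₁) (sub_nonneg.mpr ht₂)]

theorem Int.card_filter_mul_eq_le (s : Finset (ℤ × ℤ)) {n : ℤ} (hn : n ≠ 0) :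
    #{p ∈ s | p.1 * p.2 = n} ≤ 2 * #n.natAbs.divisors := by
  have hmaps : ∀ p ∈ {p ∈ s | p.1 * p.2 = n}, p.1 ∈
      n.natAbs.divisors.image (fun d : ℕ => (d : ℤ)) ∪
        n.natAbs.divisors.image (fun d : ℕ => -(d : ℤ)) := by
    intro p hp
    have hdvd : p.1.natAbs ∈ n.natAbs.divisors :=
      Nat.mem_divisors.mpr ⟨Int.natAbs_dvd_natAbs.mpr ⟨p.2, (mem_filter.mp hp).2.symm⟩,
        Int.natAbs_ne_zero.mpr hn⟩
    rcases Int.natAbs_eq p.1 with h | h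
    · exact mem_union_left _ (mem_image.mpr ⟨_, hdvd, h.symm⟩)
    · exact mem_union_right _ (mem_image.mpr ⟨_, hdvd, h.symm⟩)
  have hinj : Set.InjOn Prod.fst (({p ∈ s | p.1 * p.2 = n} : Finset (ℤ × ℤ)) : Set (ℤ × ℤ)) := by
    intro p hp q hq h
    simp only [coe_filter, Set.mem_ofPred_eq] at hp hq
    have hp0 : p.1 ≠ 0 := by rintro h0; simp [h0] at hp; exact hn hp.2.symm
    exact Prod.ext h (mul_left_cancel₀ hp0 (by rw [hp.2, h, hq.2]))
  calc #{p ∈ s | p.1 * p.2 = n}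
      ≤ #(n.natAbs.divisors.image (fun d : ℕ => (d : ℤ)) ∪
          n.natAbs.divisors.image (fun d : ℕ => -(d : ℤ))) :=
        card_le_card_of_injOn Prod.fst hmaps hinj
    _ ≤ #n.natAbs.divisors + #n.natAbs.divisors :=
        (card_union_le _ _).trans (add_le_add card_image_le card_image_le)
    _ = 2 * #n.natAbs.divisors := (two_mul _).symm

theorem card_filter_mul_eq_zero_le {R : Type*} [MulZeroClass R] [NoZeroDivisors R]
    [DecidableEq R] (s : Finset R) : #{p ∈ s ×ˢ s | p.1 * p.2 = 0} ≤ 2 * #s := by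
  calc #{p ∈ s ×ˢ s | p.1 * p.2 = 0} ≤ #(({0} : Finset R) ×ˢ s ∪ s ×ˢ {0}) := by
        refine card_le_card fun p hp => ?_
        simp only [mem_filter, mem_product, mul_eq_zero] at hp
        simp only [mem_union, mem_product, mem_singleton]
        tauto
    _ ≤ 2 * #s := (card_union_le _ _).trans (by simp [two_mul])

theorem Int.card_filter_mul_sub_eq_one_le (s : Finset (ℤ × ℤ)) :
    #{x ∈ s | x.2 * (x.1 - x.2) = 1} ≤ 2 := by
  calc #{x ∈ s | x.2 * (x.1 - x.2) = 1} ≤ #({(2, 1), (-2, -1)} : Finset (ℤ × ℤ)) := by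
        refine card_le_card fun x hx => ?_
        rcases Int.mul_eq_one_iff_eq_one_or_neg_one.mp (mem_filter.mp hx).2 with ⟨h1, h2⟩ | ⟨h1, h2⟩
        · simp [Prod.ext_iff]; omega
        · simp [Prod.ext_iff]; omega
    _ ≤ 2 := card_le_two

theorem sum_Ioc_one_inv_sq_le (N : ℕ) : ∑ g ∈ Ioc 1 N, ((g : ℝ) ^ 2)⁻¹ ≤ 11 / 12 :=
  calc ∑ g ∈ Ioc 1 N, ((g : ℝ) ^ 2)⁻¹ ≤ ∑ g ∈ insert 2 (Ioo 2 (N + 1)), ((g : ℝ) ^ 2)⁻¹ := by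
        refine sum_le_sum_of_subset_of_nonneg (fun g hg => ?_) fun _ _ _ => by positivity
        simp only [mem_Ioc, mem_insert, mem_Ioo] at hg ⊢
        omega
    _ = ((2 : ℝ) ^ 2)⁻¹ + ∑ g ∈ Ioo 2 (N + 1), ((g : ℝ) ^ 2)⁻¹ := by
        rw [sum_insert (by simp)]; norm_num
    _ ≤ ((2 : ℝ) ^ 2)⁻¹ + 2 / (2 + 1) := by grw [sum_Ioo_inv_sq_le]; norm_num
    _ = 11 / 12 := by norm_num

theorem card_coprime_pairs_ge (N : ℕ) :
    (N : ℝ) ^ 2 / 12 ≤ #{p ∈ Ioc 0 N ×ˢ Ioc 0 N | p.1.Coprime p.2} := by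
  set I := Ioc 0 N
  set multiples : ℕ → Finset ℕ := fun g => {x ∈ I | g ∣ x}
  have hsub : {p ∈ I ×ˢ I | ¬p.1.Coprime p.2} ⊆
      (Ioc 1 N).biUnion fun g => multiples g ×ˢ multiples g := by
    intro p hp
    simp only [I, multiples, mem_filter, mem_product, mem_Ioc, mem_biUnion] at hp ⊢
    refine ⟨p.1.gcd p.2, ⟨?_, ?_⟩,
      ⟨⟨hp.1.1, Nat.gcd_dvd_left _ _⟩, ⟨hp.1.2, Nat.gcd_dvd_right _ _⟩⟩⟩
    · exact lt_of_le_of_ne (Nat.gcd_pos_of_pos_left _ hp.1.1.1) (Ne.symm hp.2)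
    · exact (Nat.gcd_le_left _ hp.1.1.1).trans hp.1.1.2
  have hnot : (#{p ∈ I ×ˢ I | ¬p.1.Coprime p.2} : ℝ) ≤ 11 / 12 * N ^ 2 :=
    calc (#{p ∈ I ×ˢ I | ¬p.1.Coprime p.2} : ℝ)
        ≤ ∑ g ∈ Ioc 1 N, ((N / g : ℕ) : ℝ) ^ 2 := by
          have := (card_le_card hsub).trans card_biUnion_le
          simp only [multiples, I, card_product, Nat.Ioc_filter_dvd_card_eq_div, ← sq] at this
          exact_mod_cast this
      _ ≤ ∑ g ∈ Ioc 1 N, (N : ℝ) ^ 2 * ((g : ℝ) ^ 2)⁻¹ := by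
          gcongr with g
          rw [← div_eq_mul_inv, ← div_pow]
          gcongr
          exact Nat.cast_div_le
      _ ≤ 11 / 12 * N ^ 2 := by
          rw [← mul_sum, mul_comm]
          gcongr
          exact sum_Ioc_one_inv_sq_le N
  have htotal := card_filter_add_card_filter_not (s := I ×ˢ I) (fun p => p.1.Coprime p.2)
  rw [card_product, Nat.card_Ioc, Nat.sub_zero] at htotal
  have : (#{p ∈ I ×ˢ I | p.1.Coprime p.2} : ℝ) + #{p ∈ I ×ˢ I | ¬p.1.Coprime p.2} = N ^ 2 := by
    exact_mod_cast htotal.trans (sq N).symm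
  linarith

theorem Int.exists_mul_sub_mul_eq_one_abs_le {a c : ℤ} (ha : 0 < a) (hc : 0 < c)
    (h : IsCoprime a c) : ∃ b d, a * d - b * c = 1 ∧ |b| ≤ a ∧ |d| ≤ c := by
  obtain ⟨u, v, huv⟩ := h
  have hdvd : c ∣ a * (u % c) - 1 :=
    ⟨-v - a * (u / c), by rw [Int.emod_def]; linear_combination huv⟩
  obtain ⟨b, hb⟩ := hdvd
  have hd0 := Int.emod_nonneg u hc.ne'
  have hdc := Int.emod_lt_of_pos u hc
  refine ⟨b, u % c, by linear_combination hb, abs_le.mpr ⟨?_, ?_⟩,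
    abs_le.mpr ⟨by omega, hdc.le⟩⟩
  · nlinarith
  · nlinarith

theorem abs_apply_le_snorm (γ : SL(2, ℤ)) (i j : Fin 2) : |(γ i j : ℝ)| ≤ snorm γ :=
  Matrix.abs_apply_le_norm_toEuclideanCLM ((γ : Matrix (Fin 2) (Fin 2) ℤ).map Int.cast) i j

theorem snorm_le_two_mul (γ : SL(2, ℤ)) {m : ℝ} (h : ∀ i j, |(γ i j : ℝ)| ≤ m) :
    snorm γ ≤ 2 * m := by
  have hm : 0 ≤ m := (abs_nonneg _).trans (h 0 0)
  refine (Matrix.norm_toEuclideanCLM_le_sqrt_sum_sq _).trans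
    (Real.sqrt_le_iff.mpr ⟨by positivity, ?_⟩)
  have hsq : ∀ i j, (γ i j : ℝ) ^ 2 ≤ m ^ 2 := fun i j => sq_le_sq.mpr ((h i j).trans (le_abs_self m))
  simp only [Fin.sum_univ_two, Matrix.map_apply]
  linarith [hsq 0 0, hsq 0 1, hsq 1 0, hsq 1 1]

theorem snorm_one : snorm 1 = 1 := by
  simp [snorm]

theorem finite_setOf_snorm_le (X : ℝ) : {γ : SL(2, ℤ) | snorm γ ≤ X}.Finite := by
  have hbox : (Set.univ.pi fun _ : Fin 2 => Set.univ.pi fun _ : Fin 2 =>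
      (Icc (-(⌊X⌋₊ : ℤ)) ⌊X⌋₊ : Set ℤ)).Finite :=
    Set.Finite.pi fun _ => Set.Finite.pi fun _ => finite_toSet _
  refine (hbox.preimage Subtype.val_injective.injOn).subset fun γ hγ => ?_
  simp only [Set.mem_preimage, Set.mem_pi, Set.mem_univ, forall_const, mem_coe]
  exact fun i j => Int.mem_Icc_floor_of_abs_le ((abs_apply_le_snorm γ i j).trans hγ)

theorem card_coprime_pairs_le_ncard_setOf_snorm_le (N : ℕ) :
    #{p ∈ Ioc 0 N ×ˢ Ioc 0 N | p.1.Coprime p.2} ≤ {γ : SL(2, ℤ) | snorm γ ≤ 2 * N}.ncard := by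
  let firstColumn : SL(2, ℤ) → ℕ × ℕ := fun γ => ((γ 0 0).toNat, (γ 1 0).toNat)
  have hsub : (↑{p ∈ Ioc 0 N ×ˢ Ioc 0 N | p.1.Coprime p.2} : Set (ℕ × ℕ)) ⊆
      firstColumn '' {γ | snorm γ ≤ 2 * N} := by
    rintro ⟨a, c⟩ hp
    simp only [coe_filter, mem_product, mem_Ioc, Set.mem_ofPred_eq] at hp
    obtain ⟨⟨⟨ha, haN⟩, hc, hcN⟩, hac⟩ := hp
    obtain ⟨b, d, hdet, hb, hd⟩ := Int.exists_mul_sub_mul_eq_one_abs_le (a := a) (c := c)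
      (by omega) (by omega) (Int.isCoprime_iff_gcd_eq_one.mpr hac)
    refine ⟨⟨!![(a : ℤ), b; (c : ℤ), d], by simp [Matrix.det_fin_two_of, hdet]⟩, ?_,
      by simp [firstColumn]⟩
    refine snorm_le_two_mul _ fun i j => ?_
    have hb' : |(b : ℝ)| ≤ N := by exact_mod_cast hb.trans (by omega)
    have hd' : |(d : ℝ)| ≤ N := by exact_mod_cast hd.trans (by omega)
    fin_cases i <;> fin_cases j <;> simp [hb', hd', haN, hcN]
  calc #{p ∈ Ioc 0 N ×ˢ Ioc 0 N | p.1.Coprime p.2}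
      = (↑{p ∈ Ioc 0 N ×ˢ Ioc 0 N | p.1.Coprime p.2} : Set (ℕ × ℕ)).ncard :=
        (Set.ncard_coe_finset _).symm
    _ ≤ (firstColumn '' {γ | snorm γ ≤ 2 * N}).ncard :=
        Set.ncard_le_ncard hsub ((finite_setOf_snorm_le _).image _)
    _ ≤ _ := Set.ncard_image_le (finite_setOf_snorm_le _)

theorem ncard_setOf_snorm_le_ge {X : ℝ} (hX : 1 ≤ X) :
    X ^ 2 / 192 ≤ {γ : SL(2, ℤ) | snorm γ ≤ X}.ncard := by
  set N := ⌊X / 2⌋₊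
  have hN : X / 2 < N + 1 := Nat.lt_floor_add_one _
  have h2N : 2 * (N : ℝ) ≤ X := by linarith [Nat.floor_le (by linarith : 0 ≤ X / 2)]
  have hmono : {γ : SL(2, ℤ) | snorm γ ≤ 2 * N}.ncard ≤ {γ : SL(2, ℤ) | snorm γ ≤ X}.ncard :=
    Set.ncard_le_ncard (fun γ (hγ : snorm γ ≤ 2 * N) => hγ.trans h2N) (finite_setOf_snorm_le X)
  rcases Nat.eq_zero_or_pos N with hN0 | hN1
  · have hone : 1 ≤ {γ : SL(2, ℤ) | snorm γ ≤ X}.ncard :=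
      Set.ncard_pos (finite_setOf_snorm_le X) |>.mpr ⟨1, by simp [snorm_one, hX]⟩
    rw [hN0] at hN
    have : (1 : ℝ) ≤ {γ : SL(2, ℤ) | snorm γ ≤ X}.ncard := by exact_mod_cast hone
    nlinarith
  · have hN1' : (1 : ℝ) ≤ N := by exact_mod_cast hN1
    have := card_coprime_pairs_ge N
    have : (#{p ∈ Ioc 0 N ×ˢ Ioc 0 N | p.1.Coprime p.2} : ℝ) ≤
        {γ : SL(2, ℤ) | snorm γ ≤ X}.ncard := by
      exact_mod_cast (card_coprime_pairs_le_ncard_setOf_snorm_le N).trans hmono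
    nlinarith

/-- The points `((tr γ, γ₀₀), (γ₀₁, γ₁₀))` of the matrices `γ ∈ SL(2, ℤ)` with `|tr γ| ≤ K` and
first three entries bounded by `M`; the fourth entry is `tr γ - γ₀₀`. -/
noncomputable def slTwoPoints (K M : ℕ) : Finset ((ℤ × ℤ) × ℤ × ℤ) :=
  {q ∈ (Icc (-K : ℤ) K ×ˢ Icc (-M : ℤ) M) ×ˢ (Icc (-M : ℤ) M ×ˢ Icc (-M : ℤ) M) |
    q.2.1 * q.2.2 = q.1.2 * (q.1.1 - q.1.2) - 1}

theorem card_slTwoPoints_eq_sum (K M : ℕ) :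
    #(slTwoPoints K M) = ∑ x ∈ Icc (-K : ℤ) K ×ˢ Icc (-M : ℤ) M,
      #{p ∈ Icc (-M : ℤ) M ×ˢ Icc (-M : ℤ) M | p.1 * p.2 = x.2 * (x.1 - x.2) - 1} := by
  rw [slTwoPoints, card_filter, sum_product]
  simp only [card_filter]

theorem card_slTwoPoints_fiber_le {K M : ℕ} {D : ℝ}
    (hD : ∀ n : ℕ, n ≠ 0 → n ≤ (K + M + 1) ^ 2 → (#n.divisors : ℝ) ≤ D)
    {x : ℤ × ℤ} (hx : x ∈ Icc (-K : ℤ) K ×ˢ Icc (-M : ℤ) M) :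
    (#{p ∈ Icc (-M : ℤ) M ×ˢ Icc (-M : ℤ) M | p.1 * p.2 = x.2 * (x.1 - x.2) - 1} : ℝ) ≤
      (if x.2 * (x.1 - x.2) = 1 then (2 * (2 * M + 1) : ℝ) else 0) + 2 * D := by
  have hD0 : 0 ≤ D := le_trans (by simp) (hD 1 one_ne_zero (Nat.one_le_pow _ _ (by omega)))
  split_ifs with h0
  · have := card_filter_mul_eq_zero_le (Icc (-M : ℤ) M)
    rw [Int.card_Icc_neg_natCast] at this
    rw [h0, sub_self]
    have : (#{p ∈ Icc (-M : ℤ) M ×ˢ Icc (-M : ℤ) M | p.1 * p.2 = 0} : ℝ) ≤ 2 * (2 * M + 1) := by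
      exact_mod_cast this
    linarith
  · have hn : x.2 * (x.1 - x.2) - 1 ≠ 0 := sub_ne_zero.mpr h0
    have := Int.card_filter_mul_eq_le (Icc (-M : ℤ) M ×ˢ Icc (-M : ℤ) M) hn
    have : (#{p ∈ Icc (-M : ℤ) M ×ˢ Icc (-M : ℤ) M | p.1 * p.2 = x.2 * (x.1 - x.2) - 1} : ℝ) ≤
        2 * #(x.2 * (x.1 - x.2) - 1).natAbs.divisors := by exact_mod_cast this
    have hsize := Int.natAbs_mul_sub_sub_one_le (mem_product.mp hx).1 (mem_product.mp hx).2
    linarith [hD _ (Int.natAbs_ne_zero.mpr hn) hsize]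

theorem card_slTwoPoints_le (K M : ℕ) {D : ℝ}
    (hD : ∀ n : ℕ, n ≠ 0 → n ≤ (K + M + 1) ^ 2 → (#n.divisors : ℝ) ≤ D) :
    (#(slTwoPoints K M) : ℝ) ≤ (2 * M + 1) * (4 + 2 * (2 * K + 1) * D) := by
  set P := Icc (-K : ℤ) K ×ˢ Icc (-M : ℤ) M
  have hP : (#P : ℝ) = (2 * K + 1) * (2 * M + 1) := by
    rw [card_product, Int.card_Icc_neg_natCast, Int.card_Icc_neg_natCast]
    push_cast; ring
  calc (#(slTwoPoints K M) : ℝ)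
      = ∑ x ∈ P, (#{p ∈ Icc (-M : ℤ) M ×ˢ Icc (-M : ℤ) M |
          p.1 * p.2 = x.2 * (x.1 - x.2) - 1} : ℝ) := by
        rw [card_slTwoPoints_eq_sum, Nat.cast_sum]
    _ ≤ ∑ x ∈ P, ((if x.2 * (x.1 - x.2) = 1 then (2 * (2 * M + 1) : ℝ) else 0) + 2 * D) :=
        sum_le_sum fun _ hx => card_slTwoPoints_fiber_le hD hx
    _ = #{x ∈ P | x.2 * (x.1 - x.2) = 1} * (2 * (2 * M + 1)) + #P * (2 * D) := by
        rw [sum_add_distrib, sum_ite, sum_const_zero, add_zero, sum_const, sum_const,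
          nsmul_eq_mul, nsmul_eq_mul]
    _ ≤ 2 * (2 * (2 * M + 1)) + (2 * K + 1) * (2 * M + 1) * (2 * D) := by
        rw [hP]
        gcongr
        exact_mod_cast Int.card_filter_mul_sub_eq_one_le P
    _ = (2 * M + 1) * (4 + 2 * (2 * K + 1) * D) := by ring

theorem ncard_setOf_snorm_le_abs_trace_le_le (T X : ℝ) :
    {γ : SL(2, ℤ) | snorm γ ≤ X ∧ |((γ.1.trace : ℤ) : ℝ)| ≤ T}.ncard ≤
      #(slTwoPoints ⌊T⌋₊ ⌊X⌋₊) := by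
  let coords : SL(2, ℤ) → (ℤ × ℤ) × ℤ × ℤ := fun γ => ((γ.1.trace, γ 0 0), (γ 0 1, γ 1 0))
  have hmaps : ∀ γ ∈ {γ : SL(2, ℤ) | snorm γ ≤ X ∧ |((γ.1.trace : ℤ) : ℝ)| ≤ T},
      coords γ ∈ (slTwoPoints ⌊T⌋₊ ⌊X⌋₊ : Set _) := by
    rintro γ ⟨hX, hT⟩
    have hentry : ∀ i j, γ i j ∈ Icc (-(⌊X⌋₊ : ℤ)) ⌊X⌋₊ := fun i j =>
      Int.mem_Icc_floor_of_abs_le ((abs_apply_le_snorm γ i j).trans hX)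
    have hdet : γ 0 0 * γ 1 1 - γ 0 1 * γ 1 0 = 1 := by rw [← Matrix.det_fin_two]; exact γ.2
    simp only [slTwoPoints, coe_filter, mem_product, Set.mem_ofPred_eq, coords,
      Matrix.trace_fin_two]
    refine ⟨⟨⟨?_, hentry 0 0⟩, hentry 0 1, hentry 1 0⟩, by linear_combination -hdet⟩
    rw [← Matrix.trace_fin_two]
    exact Int.mem_Icc_floor_of_abs_le hT
  have hinj : Set.InjOn coords {γ : SL(2, ℤ) | snorm γ ≤ X ∧ |((γ.1.trace : ℤ) : ℝ)| ≤ T} := by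
    intro γ _ δ _ h
    simp only [coords, Prod.mk.injEq, Matrix.trace_fin_two] at h
    obtain ⟨⟨htr, h00⟩, h01, h10⟩ := h
    have h11 : γ 1 1 = δ 1 1 := by linarith
    ext i j
    fin_cases i <;> fin_cases j <;> assumption
  simpa using Set.ncard_le_ncard_of_injOn coords hmaps hinj (finite_toSet _)

theorem exists_ncard_setOf_snorm_le_abs_trace_le_le_rpow {T : ℝ} (hT : 0 ≤ T) {ε : ℝ}
    (hε : 0 < ε) : ∃ C, 0 < C ∧ ∀ X, 1 ≤ X →
      ({γ : SL(2, ℤ) | snorm γ ≤ X ∧ |((γ.1.trace : ℤ) : ℝ)| ≤ T}.ncard : ℝ) ≤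
        C * X ^ (1 + ε) := by
  obtain ⟨C₀, hC₀, hdiv⟩ := Nat.exists_card_divisors_le_mul_rpow (half_pos hε)
  refine ⟨3 * (4 + 2 * (2 * T + 1) * (C₀ * (T + 2) ^ ε)), by positivity, fun X hX => ?_⟩
  have hX0 : 0 < X := by linarith
  set K := ⌊T⌋₊
  set M := ⌊X⌋₊
  have hK : (K : ℝ) ≤ T := Nat.floor_le hT
  have hM : (M : ℝ) ≤ X := Nat.floor_le hX0.le
  have hXε : 1 ≤ X ^ ε := Real.one_le_rpow hX hε.le
  have hD : ∀ n : ℕ, n ≠ 0 → n ≤ (K + M + 1) ^ 2 →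
      (#n.divisors : ℝ) ≤ C₀ * (T + 2) ^ ε * X ^ ε := by
    intro n hn hnle
    have hn' : (n : ℝ) ≤ ((T + 2) * X) ^ 2 := by
      have : (K + M + 1 : ℝ) ≤ (T + 2) * X := by nlinarith
      calc (n : ℝ) ≤ ((K + M + 1 : ℕ) : ℝ) ^ 2 := by exact_mod_cast hnle
        _ ≤ ((T + 2) * X) ^ 2 := by push_cast; gcongr
    calc (#n.divisors : ℝ) ≤ C₀ * (n : ℝ) ^ (ε / 2) := hdiv n hn
      _ ≤ C₀ * (((T + 2) * X) ^ 2) ^ (ε / 2) := by gcongr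
      _ = C₀ * (T + 2) ^ ε * X ^ ε := by
        rw [← Real.rpow_natCast, ← Real.rpow_mul (by positivity),
          Real.mul_rpow (by positivity) hX0.le]
        ring_nf
  calc ({γ : SL(2, ℤ) | snorm γ ≤ X ∧ |((γ.1.trace : ℤ) : ℝ)| ≤ T}.ncard : ℝ)
      ≤ #(slTwoPoints K M) := by exact_mod_cast ncard_setOf_snorm_le_abs_trace_le_le T X
    _ ≤ (2 * M + 1) * (4 + 2 * (2 * K + 1) * (C₀ * (T + 2) ^ ε * X ^ ε)) :=
        card_slTwoPoints_le K M hD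
    _ ≤ (3 * X) * (4 * X ^ ε + 2 * (2 * T + 1) * (C₀ * (T + 2) ^ ε * X ^ ε)) := by
        gcongr <;> linarith
    _ = 3 * (4 + 2 * (2 * T + 1) * (C₀ * (T + 2) ^ ε)) * X ^ (1 + ε) := by
        rw [Real.rpow_one_add' hX0.le (by linarith)]
        ring

theorem tendsto_div_of_le_mul_rpow_of_mul_sq_le {f g : ℝ → ℝ} {A a c : ℝ} (ha : a < 2)
    (hc : 0 < c) (hf₀ : ∀ X, 0 ≤ f X) (hf : ∀ X, 1 ≤ X → f X ≤ A * X ^ a)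
    (hg : ∀ X, 1 ≤ X → c * X ^ 2 ≤ g X) :
    Tendsto (fun X => f X / g X) atTop (nhds 0) := by
  have hlim : Tendsto (fun X : ℝ => A / c * X ^ (-(2 - a))) atTop (nhds 0) := by
    simpa using (tendsto_rpow_neg_atTop (by linarith : 0 < 2 - a)).const_mul (A / c)
  refine tendsto_of_tendsto_of_tendsto_of_le_of_le' tendsto_const_nhds hlim
    (eventually_atTop.mpr ⟨1, fun X hX => ?_⟩) (eventually_atTop.mpr ⟨1, fun X hX => ?_⟩)
  · exact div_nonneg (hf₀ X) (le_trans (by positivity) (hg X hX))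
  · have hX0 : 0 < X := by linarith
    calc f X / g X ≤ A * X ^ a / (c * X ^ 2) :=
          div_le_div₀ ((hf₀ X).trans (hf X hX)) (hf X hX) (by positivity) (hg X hX)
      _ = A / c * X ^ (-(2 - a)) := by
          rw [neg_sub, Real.rpow_sub hX0, Real.rpow_two]
          field_simp

/-- For fixed `T > 0`, the number of `γ ∈ SL₂(ℤ)` with `‖γ‖ ≤ X` and `|tr γ| < T`
is `O_ε(T·X^{1+ε})`; since the ball `B_X` has `≫ X²` elements, the proportion of
elements of norm at most `X` with `|trace| ≤ T` tends to `0` as `X → ∞`. -/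
theorem small_trace_sparse (T : ℝ) (hT : 0 < T) :
    (∀ ε : ℝ, 0 < ε → ∃ C : ℝ, 0 < C ∧ ∀ X : ℝ, 1 ≤ X →
      (({γ : Matrix.SpecialLinearGroup (Fin 2) ℤ |
          snorm γ ≤ X ∧ |((Matrix.trace γ.1 : ℤ) : ℝ)| < T}).ncard : ℝ)
        ≤ C * T * X ^ ((1 : ℝ) + ε)) ∧
    (∃ c : ℝ, 0 < c ∧ ∀ X : ℝ, 1 ≤ X →
      c * X ^ 2 ≤ (({γ : Matrix.SpecialLinearGroup (Fin 2) ℤ | snorm γ ≤ X}).ncard : ℝ)) ∧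
    Tendsto (fun X : ℝ =>
      (({γ : Matrix.SpecialLinearGroup (Fin 2) ℤ |
          snorm γ ≤ X ∧ |((Matrix.trace γ.1 : ℤ) : ℝ)| ≤ T}).ncard : ℝ) /
      (({γ : Matrix.SpecialLinearGroup (Fin 2) ℤ | snorm γ ≤ X}).ncard : ℝ))
      atTop (nhds 0) := by
  have hfinite : ∀ X : ℝ, {γ : Matrix.SpecialLinearGroup (Fin 2) ℤ |
      snorm γ ≤ X ∧ |((Matrix.trace γ.1 : ℤ) : ℝ)| ≤ T}.Finite :=
    fun X => (finite_setOf_snorm_le X).subset fun _ hγ => hγ.1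
  have hball : ∀ X : ℝ, 1 ≤ X → 1 / 192 * X ^ 2 ≤
      ({γ : Matrix.SpecialLinearGroup (Fin 2) ℤ | snorm γ ≤ X}.ncard : ℝ) :=
    fun X hX => by linarith [ncard_setOf_snorm_le_ge hX]
  refine ⟨fun ε hε => ?_, ⟨1 / 192, by norm_num, hball⟩, ?_⟩
  · obtain ⟨C, hC, hbound⟩ := exists_ncard_setOf_snorm_le_abs_trace_le_le_rpow hT.le hε
    refine ⟨C / T, div_pos hC hT, fun X hX => ?_⟩
    rw [div_mul_cancel₀ _ hT.ne']
    refine le_trans (Nat.cast_le.mpr (Set.ncard_le_ncard ?_ (hfinite X))) (hbound X hX)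
    exact fun _ hγ => ⟨hγ.1, hγ.2.le⟩
  · obtain ⟨C, -, hbound⟩ :=
      exists_ncard_setOf_snorm_le_abs_trace_le_le_rpow hT.le (by norm_num : (0 : ℝ) < 1 / 2)
    exact tendsto_div_of_le_mul_rpow_of_mul_sq_le (by norm_num) (by norm_num)
      (fun _ => Nat.cast_nonneg _) hbound hball
end

section
/- Let w be a random word of length n in the free group F₂ = ⟨x, y⟩, obtained by choosing each letter independently and uniformly from {x, y, x⁻¹, y⁻¹}. Then the probability that the reduced length of w is at least n/3 tends to 1 as n → ∞. -/
open Filter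

/-- Free reduction of a word in the letters `x^{±1}, y^{±1}` (a letter is a pair
`(generator, inverted?)`): iteratively cancel adjacent inverse pairs. -/
def reduceWord : List (Fin 2 × Bool) → List (Fin 2 × Bool)
  | [] => []
  | a :: l =>
    match reduceWord l with
    | [] => [a]
    | b :: t => if b = (a.1, !a.2) then t else a :: b :: t

namespace RWaux

/-- A 4-cycle on the alphabet. -/
def nxt (a : Fin 2 × Bool) : Fin 2 × Bool :=
  if a.2 then (a.1 + 1, false) else (a.1, true)

/-- Encode a letter relative to a distinguished letter `d`. -/
def encLetter (d a : Fin 2 × Bool) : Option (Fin 3) :=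
  if a = d then none
  else if a = nxt d then some 0
  else if a = nxt (nxt d) then some 1
  else some 2

/-- Decode a letter relative to a distinguished letter `d`. -/
def decLetter (d : Fin 2 × Bool) : Option (Fin 3) → Fin 2 × Bool
  | none => d
  | some j => if j = 0 then nxt d else if j = 1 then nxt (nxt d) else nxt (nxt (nxt d))

lemma decLetter_encLetter : ∀ d a, decLetter d (encLetter d a) = a := by decide

/-- Distinguished letter determined by a (reduced) word: the one that would cancel
against its head (arbitrary for the empty word). -/
def dLet : List (Fin 2 × Bool) → Fin 2 × Bool
  | [] => (0, false)
  | b :: _ => (b.1, !b.2)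

/-- Encode a word letter by letter, each letter relative to the distinguished letter of the
reduction of the tail. -/
def enc : List (Fin 2 × Bool) → List (Option (Fin 3))
  | [] => []
  | a :: l => encLetter (dLet (reduceWord l)) a :: enc l

/-- Decoding, a left inverse of `enc`. -/
def dec : List (Option (Fin 3)) → List (Fin 2 × Bool)
  | [] => []
  | o :: m => decLetter (dLet (reduceWord (dec m))) o :: dec m

lemma dec_enc : ∀ l, dec (enc l) = l
  | [] => rfl
  | a :: l => by
    simp only [enc, dec, dec_enc l, decLetter_encLetter]

lemma enc_length : ∀ l, (enc l).length = l.length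
  | [] => rfl
  | a :: l => by simp [enc, enc_length l]

lemma key : ∀ l : List (Fin 2 × Bool),
    l.length ≤ (reduceWord l).length + 2 * (enc l).countP (fun o => o.isNone)
  | [] => by simp [reduceWord, enc]
  | a :: l => by
    have ih := key l
    rw [show reduceWord (a :: l) = match reduceWord l with
      | [] => [a]
      | b :: t => if b = (a.1, !a.2) then t else a :: b :: t from rfl]
    rw [show enc (a :: l) = encLetter (dLet (reduceWord l)) a :: enc l from rfl]
    rw [List.countP_cons]
    cases hr : reduceWord l with
    | nil =>
      simp only [hr] at ih ⊢
      simp only [List.length_cons, List.length_nil] at *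
      omega
    | cons b t =>
      simp only [hr] at ih ⊢
      by_cases hb : b = (a.1, !a.2)
      · have ha : encLetter (dLet (b :: t)) a = none := by
          subst hb
          simp [dLet, encLetter]
        rw [if_pos hb, ha]
        simp only [List.length_cons] at *
        norm_num
        omega
      · rw [if_neg hb]
        simp only [List.length_cons] at *
        omega


def psi : Option (Fin 3) → ℤ := fun o => if o = none then 3 else -1

def Sf {n : ℕ} (f : Fin n → Option (Fin 3)) : ℤ := ∑ i, psi (f i)

lemma sum_psi : ∑ a : Option (Fin 3), psi a = 0 := by decide

lemma sum_psi_sq : ∑ a : Option (Fin 3), (psi a) ^ 2 = 12 := by decide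

lemma card_fun (n : ℕ) : Fintype.card (Fin n → Option (Fin 3)) = 4 ^ n := by
  simp [Fintype.card_fun]

lemma sum_succ (n : ℕ) (F : (Fin (n+1) → Option (Fin 3)) → ℤ) :
    ∑ f : Fin (n+1) → Option (Fin 3), F f
      = ∑ a : Option (Fin 3), ∑ g : Fin n → Option (Fin 3), F (Fin.cons a g) := by
  rw [← (Fintype.sum_equiv (Fin.consEquiv (fun _ => Option (Fin 3))) _ _ (fun p => rfl) :
      ∑ p : Option (Fin 3) × (Fin n → Option (Fin 3)), F (Fin.cons p.1 p.2)
        = ∑ f : Fin (n+1) → Option (Fin 3), F f), Fintype.sum_prod_type]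

lemma Sf_cons (n : ℕ) (a : Option (Fin 3)) (g : Fin n → Option (Fin 3)) :
    Sf (Fin.cons a g) = psi a + Sf g := by
  simp [Sf, Fin.sum_univ_succ]

lemma sum_Sf (n : ℕ) : ∑ f : Fin n → Option (Fin 3), Sf f = 0 := by
  induction n with
  | zero => simp [Sf]
  | succ n ih =>
    rw [sum_succ]
    simp only [Sf_cons]
    rw [Finset.sum_comm]
    have h4 : ∀ g : Fin n → Option (Fin 3), ∑ a : Option (Fin 3), (psi a + Sf g) = 4 * Sf g := by
      intro g
      rw [Finset.sum_add_distrib, sum_psi, Finset.sum_const, zero_add, Finset.card_univ]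
      simp
    rw [Finset.sum_congr rfl fun g _ => h4 g, ← Finset.mul_sum, ih, mul_zero]

lemma sum_Sf_sq (n : ℕ) :
    ∑ f : Fin n → Option (Fin 3), (Sf f) ^ 2 = 3 * n * 4 ^ n := by
  induction n with
  | zero => simp [Sf]
  | succ n ih =>
    rw [sum_succ]
    simp only [Sf_cons, add_sq]
    have : ∀ a : Option (Fin 3),
        ∑ g : Fin n → Option (Fin 3), ((psi a)^2 + 2 * psi a * Sf g + (Sf g)^2)
          = 4 ^ n * (psi a)^2 + 3 * n * 4 ^ n := by
      intro a
      rw [Finset.sum_add_distrib, Finset.sum_add_distrib, ← Finset.mul_sum, sum_Sf, ih,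
        Finset.sum_const, Finset.card_univ, card_fun]
      ring
    rw [Finset.sum_congr rfl (fun a _ => this a)]
    rw [Finset.sum_add_distrib, ← Finset.mul_sum, sum_psi_sq, Finset.sum_const]
    simp [Finset.card_univ]
    ring

lemma Sf_eq {n : ℕ} (f : Fin n → Option (Fin 3)) :
    Sf f = 4 * ((Finset.univ.filter fun i => f i = none).card : ℤ) - n := by
  have : ∀ i, psi (f i) = 4 * (if f i = none then (1:ℤ) else 0) - 1 := by
    intro i; by_cases h : f i = none <;> simp [psi, h]
  rw [Sf, Finset.sum_congr rfl (fun i _ => this i), Finset.sum_sub_distrib,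
    ← Finset.mul_sum]
  rw [Finset.card_filter]
  push_cast
  simp



lemma card_T_mul_le (n : ℕ) :
    ((Finset.univ.filter fun f : Fin n → Option (Fin 3) =>
        n < 3 * (Finset.univ.filter fun i => f i = none).card).card : ℤ) * n ^ 2
      ≤ 27 * n * 4 ^ n := by
  set T := Finset.univ.filter fun f : Fin n → Option (Fin 3) =>
      n < 3 * (Finset.univ.filter fun i => f i = none).card with hT
  have h1 : ∀ f ∈ T, (n : ℤ) ^ 2 ≤ 9 * (Sf f) ^ 2 := by
    intro f hf
    rw [hT, Finset.mem_filter] at hf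
    have hN : (n : ℤ) + 1 ≤ 3 * ((Finset.univ.filter fun i => f i = none).card : ℤ) := by
      exact_mod_cast hf.2
    have hS := Sf_eq f
    nlinarith [hS, hN, (Nat.cast_nonneg n : (0:ℤ) ≤ n)]
  calc (T.card : ℤ) * n ^ 2 = ∑ _f ∈ T, (n : ℤ) ^ 2 := by
        rw [Finset.sum_const, nsmul_eq_mul]
    _ ≤ ∑ f ∈ T, 9 * (Sf f) ^ 2 := Finset.sum_le_sum h1
    _ ≤ ∑ f : Fin n → Option (Fin 3), 9 * (Sf f) ^ 2 :=
        Finset.sum_le_sum_of_subset_of_nonneg (Finset.subset_univ T)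
          (fun f _ _ => by positivity)
    _ = 27 * n * 4 ^ n := by rw [← Finset.mul_sum, sum_Sf_sq]; ring

lemma countP_ofFn : ∀ (n : ℕ) (f : Fin n → Option (Fin 3)),
    (List.ofFn f).countP (fun o => o.isNone)
      = (Finset.univ.filter fun i => f i = none).card
  | 0, f => by simp
  | n + 1, f => by
    rw [List.ofFn_succ, List.countP_cons, countP_ofFn n (fun i => f i.succ),
      Finset.card_filter, Finset.card_filter, Fin.sum_univ_succ]
    by_cases h : f 0 = none <;> simp [h, add_comm]

/-- The injection from words to encoded words, at the level of functions. -/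
def fW {n : ℕ} (w : Fin n → Fin 2 × Bool) : Fin n → Option (Fin 3) :=
  fun i => (enc (List.ofFn w)).getD i.val none

lemma ofFn_fW {n : ℕ} (w : Fin n → Fin 2 × Bool) :
    List.ofFn (fW w) = enc (List.ofFn w) := by
  have hl : (enc (List.ofFn w)).length = n := by rw [enc_length, List.length_ofFn]
  apply List.ext_getElem (by simp [hl])
  intro i h1 h2
  simp only [List.getElem_ofFn, fW]
  rw [List.getD_eq_getElem _ _ (by omega)]

lemma fW_injective {n : ℕ} : Function.Injective (fW (n := n)) := by
  intro w w' h
  have h2 : enc (List.ofFn w) = enc (List.ofFn w') := by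
    rw [← ofFn_fW, ← ofFn_fW, h]
  have h3 : List.ofFn w = List.ofFn w' := by
    rw [← dec_enc (List.ofFn w), h2, dec_enc]
  exact List.ofFn_injective h3

lemma fW_mem {n : ℕ} (w : Fin n → Fin 2 × Bool)
    (hw : ¬ n ≤ 3 * (reduceWord (List.ofFn w)).length) :
    n < 3 * (Finset.univ.filter fun i => fW w i = none).card := by
  have hk := key (List.ofFn w)
  rw [← ofFn_fW, countP_ofFn] at hk
  rw [List.length_ofFn] at hk
  omega

lemma card_bad_le (n : ℕ) :
    ((Finset.univ.filter (fun w : Fin n → Fin 2 × Bool =>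
        ¬ n ≤ 3 * (reduceWord (List.ofFn w)).length)).card : ℤ) * n ^ 2
      ≤ 27 * n * 4 ^ n := by
  refine le_trans ?_ (card_T_mul_le n)
  have hcard : (Finset.univ.filter (fun w : Fin n → Fin 2 × Bool =>
        ¬ n ≤ 3 * (reduceWord (List.ofFn w)).length)).card
      ≤ (Finset.univ.filter fun f : Fin n → Option (Fin 3) =>
        n < 3 * (Finset.univ.filter fun i => f i = none).card).card := by
    apply Finset.card_le_card_of_injOn fW
    · intro w hw
      rw [Finset.mem_coe, Finset.mem_filter] at hw ⊢
      exact ⟨Finset.mem_univ _, fW_mem w hw.2⟩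
    · exact fun a _ b _ h => fW_injective h
  have : (0:ℤ) ≤ (n:ℤ)^2 := by positivity
  exact mul_le_mul_of_nonneg_right (by exact_mod_cast hcard) this


end RWaux

/-- For a uniformly random word of length `n` in `{x, y, x⁻¹, y⁻¹}`, the probability
that its reduced length is at least `n/3` tends to `1` as `n → ∞`. -/
theorem random_word_reduced_length :
    Tendsto (fun n : ℕ =>
      ((Finset.univ.filter (fun w : Fin n → Fin 2 × Bool =>
          n ≤ 3 * (reduceWord (List.ofFn w)).length)).card : ℝ) / 4 ^ n)
      atTop (nhds 1) := by
  have hcard : ∀ n : ℕ,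
      (Finset.univ.filter (fun w : Fin n → Fin 2 × Bool =>
          n ≤ 3 * (reduceWord (List.ofFn w)).length)).card
        + (Finset.univ.filter (fun w : Fin n → Fin 2 × Bool =>
          ¬ n ≤ 3 * (reduceWord (List.ofFn w)).length)).card = 4 ^ n := by
    intro n
    rw [Finset.card_filter_add_card_filter_not, Finset.card_univ]
    simp [Fintype.card_fun]
  set G : ℕ → ℕ := fun n => (Finset.univ.filter (fun w : Fin n → Fin 2 × Bool =>
      n ≤ 3 * (reduceWord (List.ofFn w)).length)).card with hG
  set B : ℕ → ℕ := fun n => (Finset.univ.filter (fun w : Fin n → Fin 2 × Bool =>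
      ¬ n ≤ 3 * (reduceWord (List.ofFn w)).length)).card with hB
  have hfour : ∀ n : ℕ, (0:ℝ) < 4 ^ n := fun n => by positivity
  have hratio : ∀ n : ℕ, (G n : ℝ) / 4 ^ n = 1 - (B n : ℝ) / 4 ^ n := by
    intro n
    have h := hcard n
    have : (G n : ℝ) + B n = 4 ^ n := by exact_mod_cast congrArg (Nat.cast (R := ℝ)) h
    field_simp
    linarith
  have hBle : ∀ n : ℕ, 1 ≤ n → (B n : ℝ) / 4 ^ n ≤ 27 / n := by
    intro n hn
    have h := RWaux.card_bad_le n
    have h' : (B n : ℝ) * n ^ 2 ≤ 27 * n * 4 ^ n := by exact_mod_cast h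
    have hn' : (0:ℝ) < n := by exact_mod_cast hn
    rw [div_le_div_iff₀ (hfour n) hn']
    nlinarith [h', hn', hfour n]
  have hlow : Tendsto (fun n : ℕ => 1 - 27 / (n:ℝ)) atTop (nhds 1) := by
    have := (tendsto_const_nhds : Tendsto (fun _ : ℕ => (1:ℝ)) atTop (nhds 1)).sub
      (tendsto_const_div_atTop_nhds_zero_nat 27)
    simpa using this
  refine tendsto_of_tendsto_of_tendsto_of_le_of_le' hlow tendsto_const_nhds ?_ ?_
  · filter_upwards [eventually_ge_atTop 1] with n hn
    rw [hratio n]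
    have := hBle n hn
    linarith
  · filter_upwards [] with n
    rw [hratio n]
    have : (0:ℝ) ≤ (B n : ℝ) / 4 ^ n := by positivity
    linarith
end

section
/- Every free subgroup of infinite rank or any nonabelian free subgroup F ≤ SL_n(ℤ) with n ≥ 3 has infinite index in SL_n(ℤ). Equivalently: for n ≥ 3, no finite-index subgroup of SL_n(ℤ) is free (nonabelian free groups do not have Kazhdan's property (T), while finite-index subgroups of SL_n(ℤ), n ≥ 3, do). -/
/-!
Two commuting elements of a free group generate a subgroup that is free (Nielsen–Schreier) and
abelian, hence cyclic; so a free group contains no copy of `ℤ²`. On the other hand every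
finite-index subgroup of `SL_n(ℤ)`, `n ≥ 3`, contains nontrivial powers of the commuting
transvections `1 + E₀₂` and `1 + E₁₂`, and these generate a copy of `ℤ²`.
-/

theorem FreeGroup.subsingleton_of_isMulCommutative {X : Type*} [IsMulCommutative (FreeGroup X)] :
    Subsingleton X := by
  classical
  refine ⟨fun x y => by_contra fun hxy => ?_⟩
  let f : FreeGroup X →* Equiv.Perm (Fin 3) :=
    FreeGroup.lift fun z => if z = x then Equiv.swap 0 1 else Equiv.swap 1 2
  have hfx : f (FreeGroup.of x) = Equiv.swap 0 1 := by simp [f]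
  have hfy : f (FreeGroup.of y) = Equiv.swap 1 2 := by simp [f, Ne.symm hxy]
  have := congrArg f (mul_comm' (FreeGroup.of x) (FreeGroup.of y))
  rw [_root_.map_mul, _root_.map_mul, hfx, hfy] at this
  exact absurd this (by decide)

theorem IsFreeGroup.isCyclic_of_isMulCommutative {G : Type*} [Group G] [IsFreeGroup G]
    [IsMulCommutative G] : IsCyclic G := by
  let e := IsFreeGroup.toFreeGroup G
  have : IsMulCommutative (FreeGroup (IsFreeGroup.Generators G)) :=
    isMulCommutative_iff.2 fun x y =>
      e.symm.injective (by simp only [map_mul, mul_comm' (e.symm x)])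
  have := FreeGroup.subsingleton_of_isMulCommutative (X := IsFreeGroup.Generators G)
  rcases isEmpty_or_nonempty (IsFreeGroup.Generators G) with _ | ⟨⟨x⟩⟩
  · exact isCyclic_of_surjective e.symm e.symm.surjective
  · have : Unique (IsFreeGroup.Generators G) := uniqueOfSubsingleton x
    exact isCyclic_of_surjective e.symm e.symm.surjective

theorem IsFreeGroup.exists_eq_zpow_of_commute {G : Type*} [Group G] [IsFreeGroup G] {a b : G}
    (hab : Commute a b) : ∃ c : G, ∃ p q : ℤ, a = c ^ p ∧ b = c ^ q := by
  let K := Subgroup.closure {a, b}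
  have : IsMulCommutative K := Subgroup.isMulCommutative_closure (by
    simp only [Set.mem_insert_iff, Set.mem_singleton_iff]
    rintro _ (rfl | rfl) _ (rfl | rfl)
    exacts [rfl, hab, hab.symm, rfl])
  obtain ⟨c, hc⟩ := (IsFreeGroup.isCyclic_of_isMulCommutative (G := K)).exists_generator
  obtain ⟨p, hp⟩ := Subgroup.mem_zpowers_iff.1 (hc ⟨a, Subgroup.subset_closure (by simp)⟩)
  obtain ⟨q, hq⟩ := Subgroup.mem_zpowers_iff.1 (hc ⟨b, Subgroup.subset_closure (by simp)⟩)
  exact ⟨c, p, q, congrArg Subtype.val hp.symm, congrArg Subtype.val hq.symm⟩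

theorem Subgroup.index_eq_zero_of_isFreeGroup {G : Type*} [Group G] {x y : G}
    (hxy : Commute x y) (hind : ∀ p q : ℤ, x ^ p = y ^ q → p = 0 ∧ q = 0)
    (H : Subgroup G) [IsFreeGroup H] : H.index = 0 := by
  by_contra hH
  obtain ⟨k, hk, -, hxk⟩ := H.exists_pow_mem_of_index_ne_zero hH x
  obtain ⟨m, hm, -, hym⟩ := H.exists_pow_mem_of_index_ne_zero hH y
  obtain ⟨c, p, q, hp, hq⟩ := IsFreeGroup.exists_eq_zpow_of_commute
    (a := (⟨x ^ k, hxk⟩ : H)) (b := ⟨y ^ m, hym⟩) (Subtype.ext (hxy.pow_pow k m))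
  have hx : x ^ k = (c : G) ^ p := congrArg Subtype.val hp
  have hy : y ^ m = (c : G) ^ q := congrArg Subtype.val hq
  have hpq : x ^ ((k : ℤ) * q) = y ^ ((m : ℤ) * p) := by
    rw [zpow_mul, zpow_mul, zpow_natCast, zpow_natCast, hx, hy, ← zpow_mul, ← zpow_mul, mul_comm]
  have hq0 : q = 0 := by simpa [hk.ne'] using (hind _ _ hpq).1
  have hym1 : x ^ (0 : ℤ) = y ^ (m : ℤ) := by rw [zpow_natCast, hy, hq0, zpow_zero, zpow_zero]
  have := (hind _ _ hym1).2
  omega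

namespace Matrix.SpecialLinearGroup

variable {ι R : Type*} [Fintype ι] [DecidableEq ι] [CommRing R]

def transvectionHom {i j : ι} (hij : i ≠ j) : Multiplicative R →* SpecialLinearGroup ι R where
  toFun c := transvection hij c.toAdd
  map_one' := transvection_coeff_zero hij
  map_mul' c d := transvection_add hij c.toAdd d.toAdd

theorem transvection_zpow {i j : ι} (hij : i ≠ j) (b : R) (m : ℤ) :
    transvection hij b ^ m = transvection hij (m • b) :=
  (map_zpow (transvectionHom hij) (Multiplicative.ofAdd b) m).symm

theorem commute_transvection {i j l : ι} (hil : i ≠ l) (hjl : j ≠ l) (a b : R) :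
    Commute (transvection hil a) (transvection hjl b) := Subtype.ext <| by
  simp [transvection_coe, mul_add, add_mul, single_mul_single_of_ne _ _ _ _ hil.symm,
    single_mul_single_of_ne _ _ _ _ hjl.symm, add_comm, add_left_comm]

theorem transvection_eq_transvection_iff {i j l : ι} (hij : i ≠ j) (hil : i ≠ l) (hjl : j ≠ l)
    (a b : R) : transvection hil a = transvection hjl b ↔ a = 0 ∧ b = 0 := by
  refine ⟨fun h => ⟨?_, ?_⟩, fun ⟨ha, hb⟩ => by simp [ha, hb]⟩
  · simpa [transvection_coe, hil, single_apply_of_row_ne hij.symm] using congr($h i l)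
  · simpa [transvection_coe, hjl, single_apply_of_row_ne hij] using congr($h j l).symm

end Matrix.SpecialLinearGroup

theorem free_subgroup_infinite_index_general (n : ℕ) (hn : 3 ≤ n)
    (H : Subgroup (Matrix.SpecialLinearGroup (Fin n) ℤ))
    (hfree : IsFreeGroup H) :
    H.index = 0 := by
  have h01 : (⟨0, by omega⟩ : Fin n) ≠ ⟨1, by omega⟩ := by simp
  have h02 : (⟨0, by omega⟩ : Fin n) ≠ ⟨2, by omega⟩ := by simp
  have h12 : (⟨1, by omega⟩ : Fin n) ≠ ⟨2, by omega⟩ := by simp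
  refine H.index_eq_zero_of_isFreeGroup
    (Matrix.SpecialLinearGroup.commute_transvection h02 h12 1 1) fun p q h => ?_
  rwa [Matrix.SpecialLinearGroup.transvection_zpow, Matrix.SpecialLinearGroup.transvection_zpow,
    Matrix.SpecialLinearGroup.transvection_eq_transvection_iff h01,
    zsmul_one, zsmul_one, Int.cast_id, Int.cast_id] at h

/-- For `n ≥ 3`, every nonabelian free subgroup of `SL_n(ℤ)` has infinite index
(equivalently, no finite-index subgroup of `SL_n(ℤ)`, `n ≥ 3`, is nonabelian free):
`SL_n(ℤ)` has Kazhdan's property (T) while nonabelian free groups do not.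
(`H.index = 0` encodes infinite index.) -/
theorem free_subgroup_infinite_index (n : ℕ) (hn : 3 ≤ n)
    (H : Subgroup (Matrix.SpecialLinearGroup (Fin n) ℤ))
    (hfree : IsFreeGroup H) (hnonab : ¬ ∀ a b : H, a * b = b * a) :
    H.index = 0 :=
  free_subgroup_infinite_index_general n hn H hfree
end
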